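/- arXiv:2511.11711 — 10 statements merged into one kernel-verified Lean document; each statement's English description precedes it below -/
import Mathlib

section
/- Let W_1, …, W_p be real numbers, H0 ⊆ {1, …, p}, q > 0, and t > 0 a threshold satisfying (1 + #{j : W_j ≤ −t}) / max(1, #{j : W_j ≥ t}) ≤ q. Then the false discovery proportion at t satisfies the deterministic bound #{j ∈ H0 : W_j ≥ t} / max(1, #{j : W_j ≥ t}) ≤ q · #{j ∈ H0 : W_j ≥ t} / (1 + #{j ∈ H0 : W_j ≤ −t}). -/
open Finset

theorem div_le_mul_div_one_add_of_le {a d m n q : ℝ} (ha : 0 ≤ a) (hd : 0 < d) (hm : 0 ≤ m)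
    (hmn : m ≤ n) (h : (1 + n) / d ≤ q) : a / d ≤ q * a / (1 + m) := by
  rw [div_le_div_iff₀ hd (by positivity)]
  have hqd : 1 + n ≤ q * d := (div_le_iff₀ hd).mp h
  calc a * (1 + m) ≤ a * (1 + n) := by gcongr
    _ ≤ a * (q * d) := by gcongr
    _ = q * a * d := by ring

theorem knockoff_fdp_decomposition_general {p : ℕ} (W : Fin p → ℝ) (H0 : Finset (Fin p))
    (q t : ℝ)
    (hcond : (1 + ((univ.filter fun j => W j ≤ -t).card : ℝ)) /
        max 1 ((univ.filter fun j => t ≤ W j).card : ℝ) ≤ q) :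
    ((H0.filter fun j => t ≤ W j).card : ℝ) /
        max 1 ((univ.filter fun j => t ≤ W j).card : ℝ) ≤
      q * ((H0.filter fun j => t ≤ W j).card : ℝ) /
        (1 + ((H0.filter fun j => W j ≤ -t).card : ℝ)) := by
  have hnull : ((H0.filter fun j => W j ≤ -t).card : ℝ) ≤
      (univ.filter fun j => W j ≤ -t).card := by
    exact_mod_cast card_le_card (filter_subset_filter _ (subset_univ H0))
  exact div_le_mul_div_one_add_of_le (by positivity) (by positivity) (by positivity) hnull hcond

/-- **Deterministic decomposition step of the knockoff+ FDR proof.**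
Let `W_1, …, W_p` be real numbers, `H0 ⊆ {1, …, p}`, `q > 0`, and `t > 0` a
threshold satisfying `(1 + #{j : W_j ≤ −t}) / max(1, #{j : W_j ≥ t}) ≤ q`.
Then the false discovery proportion at `t` satisfies
`#{j ∈ H0 : W_j ≥ t} / max(1, #{j : W_j ≥ t})
  ≤ q · #{j ∈ H0 : W_j ≥ t} / (1 + #{j ∈ H0 : W_j ≤ −t})`. -/
theorem knockoff_fdp_decomposition {p : ℕ} (W : Fin p → ℝ) (H0 : Finset (Fin p))
    (q t : ℝ) (hq : 0 < q) (ht : 0 < t)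
    (hcond : (1 + ((univ.filter fun j => W j ≤ -t).card : ℝ)) /
        max 1 ((univ.filter fun j => t ≤ W j).card : ℝ) ≤ q) :
    ((H0.filter fun j => t ≤ W j).card : ℝ) /
        max 1 ((univ.filter fun j => t ≤ W j).card : ℝ) ≤
      q * ((H0.filter fun j => t ≤ W j).card : ℝ) /
        (1 + ((H0.filter fun j => W j ≤ -t).card : ℝ)) :=
  knockoff_fdp_decomposition_general W H0 q t hcond
end

section
/- Let n be a natural number, ρ ∈ (0, 1), and let B be a random variable with the binomial distribution with n trials and success probability ρ. Then E[ B / (1 + n − B) ] ≤ ρ / (1 − ρ). -/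
/-!
With `w k = C(n,k) ρ^k (1-ρ)^(n-k)`, the identity `(k+1) C(n,k+1) = (n-k) C(n,k)` gives
`w (k+1) * (k+1)/(n-k) = ρ/(1-ρ) * w k`. Since the `k = 0` term vanishes, the expectation is
`ρ/(1-ρ) * ∑_{k<n} w k = ρ/(1-ρ) * (1 - ρ^n)`.
-/

open MeasureTheory Finset

def binomialWeight (n : ℕ) (ρ : ℝ) (k : ℕ) : ℝ :=
  n.choose k * ρ ^ k * (1 - ρ) ^ (n - k)

namespace binomialWeight

variable {n : ℕ} {ρ : ℝ}

theorem nonneg (h₀ : 0 ≤ ρ) (h₁ : ρ ≤ 1) (k : ℕ) : 0 ≤ binomialWeight n ρ k := by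
  unfold binomialWeight
  have : 0 ≤ 1 - ρ := by linarith
  positivity

theorem eq_zero_of_lt {k : ℕ} (hk : n < k) : binomialWeight n ρ k = 0 := by
  simp [binomialWeight, Nat.choose_eq_zero_of_lt hk]

theorem sum_range_succ_eq_one : ∑ k ∈ range (n + 1), binomialWeight n ρ k = 1 := by
  have h := add_pow ρ (1 - ρ) n
  rw [add_sub_cancel, one_pow] at h
  exact (sum_congr rfl fun k _ => by rw [binomialWeight]; ring).trans h.symm

theorem succ_mul_ratio (hρ : ρ ≠ 1) {k : ℕ} (hk : k < n) :
    binomialWeight n ρ (k + 1) * ((k + 1 : ℕ) / (1 + n - (k + 1 : ℕ))) =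
      ρ / (1 - ρ) * binomialWeight n ρ k := by
  have hchoose : (n.choose (k + 1) : ℝ) * (k + 1) = n.choose k * (n - k) := by
    rw [← Nat.cast_sub hk.le]
    exact_mod_cast Nat.choose_succ_right_eq n k
  have hpow : n - k = n - (k + 1) + 1 := by omega
  have hnk : (n : ℝ) - k ≠ 0 := sub_ne_zero.mpr (by exact_mod_cast hk.ne')
  have h1ρ : 1 - ρ ≠ 0 := sub_ne_zero.mpr hρ.symm
  rw [binomialWeight, binomialWeight, hpow]
  push_cast
  rw [show (1 : ℝ) + n - (k + 1) = n - k by ring]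
  field_simp
  linear_combination (ρ ^ (k + 1) * (1 - ρ) ^ (n - (k + 1)) * (1 - ρ)) * hchoose

theorem sum_mul_ratio (hρ : ρ ≠ 1) :
    ∑ k ∈ range (n + 1), binomialWeight n ρ k * (k / (1 + n - k)) =
      ρ / (1 - ρ) * ∑ k ∈ range n, binomialWeight n ρ k := by
  rw [sum_range_succ', mul_sum]
  simp only [CharP.cast_eq_zero, zero_div, mul_zero, add_zero]
  exact sum_congr rfl fun k hk => succ_mul_ratio hρ (mem_range.mp hk)

end binomialWeight

section LawOfNatValued

variable {Ω : Type*} [MeasurableSpace Ω] (P : Measure Ω) {B : Ω → ℕ}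

theorem map_eq_sum_dirac_of_support_le (hB : Measurable B) {n : ℕ}
    (hsupp : ∀ k, n < k → P (B ⁻¹' {k}) = 0) :
    P.map B = ∑ k ∈ range (n + 1), P (B ⁻¹' {k}) • Measure.dirac k := by
  refine Measure.ext_of_singleton fun j => ?_
  rw [Measure.map_apply hB (measurableSet_singleton j), Measure.coe_finsetSum, Finset.sum_apply]
  simp only [Measure.smul_apply, Measure.dirac_apply, smul_eq_mul]
  simpa [Set.indicator] using hsupp j

theorem integral_comp_eq_sum_of_support_le [IsFiniteMeasure P] (hB : Measurable B) {n : ℕ}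
    (hsupp : ∀ k, n < k → P (B ⁻¹' {k}) = 0) (f : ℕ → ℝ) :
    ∫ ω, f (B ω) ∂P = ∑ k ∈ range (n + 1), P.real (B ⁻¹' {k}) * f k := by
  rw [← integral_map hB.aemeasurable (measurable_from_top (f := f)).aestronglyMeasurable,
    map_eq_sum_dirac_of_support_le P hB hsupp, integral_finsetSum_measure]
  · simp [integral_smul_measure, measureReal_def]
  · exact fun k _ => (integrable_dirac enorm_lt_top).smul_measure (measure_ne_top _ _)

end LawOfNatValued

/-- **Binomial ratio bound.**
Let `n` be a natural number, `ρ ∈ (0, 1)`, and let `B` be a random variable with the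
binomial distribution with `n` trials and success probability `ρ` (that is,
`P(B = k) = C(n,k) ρ^k (1−ρ)^{n−k}` for every `k`).  Then
`E[ B / (1 + n − B) ] ≤ ρ / (1 − ρ)`. -/
theorem binomial_ratio_expectation_le {Ω : Type*} [MeasurableSpace Ω]
    (P : Measure Ω) [IsProbabilityMeasure P] (n : ℕ) (ρ : ℝ) (hρ : ρ ∈ Set.Ioo 0 1)
    (B : Ω → ℕ) (hB : Measurable B)
    (hlaw : ∀ k : ℕ, P (B ⁻¹' {k}) =
      ENNReal.ofReal ((n.choose k : ℝ) * ρ ^ k * (1 - ρ) ^ (n - k))) :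
    ∫ ω, (B ω : ℝ) / (1 + (n : ℝ) - (B ω : ℝ)) ∂P ≤ ρ / (1 - ρ) := by
  obtain ⟨hρ₀, hρ₁⟩ := hρ
  have hlaw' : ∀ k, P.real (B ⁻¹' {k}) = binomialWeight n ρ k := fun k => by
    rw [measureReal_def, hlaw]
    exact ENNReal.toReal_ofReal (binomialWeight.nonneg hρ₀.le hρ₁.le k)
  have hsupp : ∀ k, n < k → P (B ⁻¹' {k}) = 0 := fun k hk => by
    rw [hlaw, ← binomialWeight, binomialWeight.eq_zero_of_lt hk, ENNReal.ofReal_zero]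
  rw [integral_comp_eq_sum_of_support_le P hB hsupp fun k => (k : ℝ) / (1 + n - k)]
  simp only [hlaw']
  rw [binomialWeight.sum_mul_ratio hρ₁.ne]
  calc ρ / (1 - ρ) * ∑ k ∈ range n, binomialWeight n ρ k
      ≤ ρ / (1 - ρ) * ∑ k ∈ range (n + 1), binomialWeight n ρ k := by
        gcongr
        · exact fun k _ _ => binomialWeight.nonneg hρ₀.le hρ₁.le k
        · exact n.le_succ
    _ = ρ / (1 - ρ) := by rw [binomialWeight.sum_range_succ_eq_one, mul_one]
end

section
/- Let ε_1, …, ε_m be i.i.d. random variables uniform on {−1, +1}. Then E[ #{j : ε_j = +1} / (1 + #{j : ε_j = −1}) ] ≤ 1. -/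
open MeasureTheory Finset

/-! Since each sign is `±1` almost surely, the number of `-1`'s is `m` minus the number of `+1`'s,
so the integrand is a function of the random set `{j | ε j ω = 1}`. By independence the random set `{j | ε j ω = 1}` is uniform on
the subsets of `Fin m`, so the expectation is `2⁻ᵐ ∑ₖ C(m, k) k / (m - k + 1)`, and
`C(m, k) k / (m - k + 1) = C(m, k - 1)` makes the sum `2ᵐ - 1`. -/

theorem sum_range_choose_mul_div_eq_two_pow_sub_one (m : ℕ) :
    ∑ k ∈ range (m + 1), (m.choose k : ℝ) * (k / (1 + ((m - k : ℕ) : ℝ))) = 2 ^ m - 1 := by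
  have hshift : ∀ k ∈ range m,
      (m.choose (k + 1) : ℝ) * ((k + 1 : ℕ) / (1 + ((m - (k + 1) : ℕ) : ℝ))) = m.choose k := by
    intro k hk
    have hkm : k < m := mem_range.1 hk
    have hden : (1 : ℝ) + ((m - (k + 1) : ℕ) : ℝ) = ((m - k : ℕ) : ℝ) := by
      rw [Nat.cast_sub hkm, Nat.cast_sub hkm.le]; push_cast; ring
    have hpos : (0 : ℝ) < ((m - k : ℕ) : ℝ) := by exact_mod_cast Nat.sub_pos_of_lt hkm
    rw [hden, mul_div_assoc', div_eq_iff hpos.ne', ← Nat.cast_mul, Nat.choose_succ_right_eq,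
      Nat.cast_mul]
  have htotal : ∑ k ∈ range m, (m.choose k : ℝ) = 2 ^ m - 1 := by
    have := Nat.sum_range_choose m
    rw [sum_range_succ, Nat.choose_self] at this
    rw [eq_sub_iff_add_eq, ← Nat.cast_sum]
    exact_mod_cast this
  rw [sum_range_succ', sum_congr rfl hshift, htotal]
  simp

theorem sum_card_div_one_add_card_compl (ι : Type*) [Fintype ι] [DecidableEq ι] :
    ∑ B : Finset ι, (#B : ℝ) / (1 + #Bᶜ) = 2 ^ Fintype.card ι - 1 := by
  simp_rw [card_compl]
  have := sum_powerset_apply_card (fun k => (k : ℝ) / (1 + ((Fintype.card ι - k : ℕ) : ℝ)))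
    (x := (univ : Finset ι))
  rw [powerset_univ, card_univ] at this
  rw [this, ← sum_range_choose_mul_div_eq_two_pow_sub_one]
  simp only [nsmul_eq_mul]

theorem ae_eq_or_eq_of_measure_add_eq_one {Ω α : Type*} [MeasurableSpace Ω] {P : Measure Ω}
    [IsProbabilityMeasure P] [MeasurableSpace α] [MeasurableSingletonClass α] {X : Ω → α} {a b : α} (hX : Measurable X)
    (hab : a ≠ b)     (h : P (X ⁻¹' {a}) + P (X ⁻¹' {b}) = 1) : ∀ᵐ ω ∂P, X ω = a ∨ X ω = b := by
  have hdisj : Disjoint (X ⁻¹' {a}) (X ⁻¹' {b}) :=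
    (Set.disjoint_singleton.2 hab).preimage X
  change ∀ᵐ ω ∂P, ω ∈ X ⁻¹' {a} ∪ X ⁻¹' {b}
  rwa [ae_mem_iff_measure_eq (hX (measurableSet_singleton a) |>.union
    (hX (measurableSet_singleton b))).nullMeasurableSet, measure_univ,
    measure_union hdisj (hX (measurableSet_singleton b))]

section RandomIndexSet

variable {Ω ι α : Type*} [Fintype ι] [DecidableEq ι] [DecidableEq α] {ε : ι → Ω → α} {a : α}

theorem setOf_filter_eq_eq_iInter (B : Finset ι) :
    {ω | univ.filter (fun j => ε j ω = a) = B} =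
      ⋂ j, ε j ⁻¹' (if j ∈ B then {a} else {a}ᶜ) := by
  ext ω
  simp only [Set.mem_ofPred_eq, Set.mem_iInter, Set.mem_preimage, Finset.ext_iff, mem_filter,
    mem_univ, true_and]
  refine forall_congr' fun j => ?_
  by_cases hj : j ∈ B <;> simp [hj]

variable [MeasurableSpace Ω] {P : Measure Ω} [IsProbabilityMeasure P] [MeasurableSpace α]
  [MeasurableSingletonClass α]

theorem measurableSet_setOf_filter_eq_eq (hmeas : ∀ j, Measurable (ε j)) (B : Finset ι) :
    MeasurableSet {ω | univ.filter (fun j => ε j ω = a) = B} := by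
  rw [setOf_filter_eq_eq_iInter]
  exact .iInter fun j => hmeas j (by split_ifs <;> simp)

theorem measure_setOf_filter_eq_eq (hmeas : ∀ j, Measurable (ε j))
    (hindep : ProbabilityTheory.iIndepFun ε P) (hhalf : ∀ j, P (ε j ⁻¹' {a}) = 1 / 2)
    (B : Finset ι) :
    P {ω | univ.filter (fun j => ε j ω = a) = B} = (2 ^ Fintype.card ι)⁻¹ := by
  have hfactor : ∀ j, P (ε j ⁻¹' (if j ∈ B then {a} else {a}ᶜ)) = 1 / 2 := fun j => by
    by_cases hj : j ∈ B
    · simp [hj, hhalf j]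
    · rw [if_neg hj, Set.preimage_compl, prob_compl_eq_one_sub (hmeas j (measurableSet_singleton a)),
        hhalf j, one_div, ENNReal.one_sub_inv_two]
  rw [setOf_filter_eq_eq_iInter,
    hindep.meas_iInter fun j => ⟨_, by split_ifs <;> simp, rfl⟩,
    prod_congr rfl fun j _ => hfactor j]
  simp [ENNReal.inv_pow]

theorem integral_comp_filter_eq (hmeas : ∀ j, Measurable (ε j))
    (hindep : ProbabilityTheory.iIndepFun ε P) (hhalf : ∀ j, P (ε j ⁻¹' {a}) = 1 / 2)
    (g : Finset ι → ℝ) :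
    ∫ ω, g (univ.filter fun j => ε j ω = a) ∂P = (∑ B, g B) / 2 ^ Fintype.card ι := by
  let E : Finset ι → Set Ω := fun B => {ω | univ.filter (fun j => ε j ω = a) = B}
  have hE : ∀ B, MeasurableSet (E B) := measurableSet_setOf_filter_eq_eq hmeas
  have hsplit : ∀ ω, g (univ.filter fun j => ε j ω = a) = ∑ B, (E B).indicator (fun _ => g B) ω :=
    fun ω => by simp [E, Set.indicator_apply]
  simp_rw [hsplit]
  rw [integral_finsetSum _ fun B _ => (integrable_const (g B)).indicator (hE B)]
  simp_rw [integral_indicator_const _ (hE _), measureReal_def, E,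
    measure_setOf_filter_eq_eq hmeas hindep hhalf, sum_div]
  simp [div_eq_inv_mul]

end RandomIndexSet

/-- **Fair-coin ratio bound.**
Let `ε_1, …, ε_m` be i.i.d. random variables uniform on `{−1, +1}`.  Then
`E[ #{j : ε_j = +1} / (1 + #{j : ε_j = −1}) ] ≤ 1`. -/
theorem sign_ratio_expectation_le_one {Ω : Type*} [MeasurableSpace Ω]
    (P : Measure Ω) [IsProbabilityMeasure P] (m : ℕ) (ε : Fin m → Ω → ℤ)
    (hmeas : ∀ j, Measurable (ε j))
    (hindep : ProbabilityTheory.iIndepFun ε P)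
    (hplus : ∀ j, P (ε j ⁻¹' {1}) = 1 / 2)
    (hminus : ∀ j, P (ε j ⁻¹' {-1}) = 1 / 2) :
    ∫ ω, ((univ.filter fun j => ε j ω = 1).card : ℝ) /
        (1 + ((univ.filter fun j => ε j ω = -1).card : ℝ)) ∂P ≤ 1 := by
  have hsigns :
      ∀ᵐ ω ∂P, (univ.filter fun j => ε j ω = -1) = (univ.filter fun j => ε j ω = 1)ᶜ := by
    have hpm : ∀ j, ∀ᵐ ω ∂P, ε j ω = 1 ∨ ε j ω = -1 := fun j =>
      ae_eq_or_eq_of_measure_add_eq_one (hmeas j) (by decide)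
        (by rw [hplus, hminus, ENNReal.add_halves])
    filter_upwards [ae_all_iff.2 hpm] with ω hω
    ext j
    rcases hω j with h | h <;> simp [h]
  set g : Finset (Fin m) → ℝ := fun B => #B / (1 + #Bᶜ)
  rw [integral_congr_ae (hsigns.mono fun ω h => show _ = g (univ.filter fun j => ε j ω = 1) by
      rw [h]), integral_comp_filter_eq hmeas hindep hplus, sum_card_div_one_add_card_compl,
    Fintype.card_fin, div_le_one (by positivity)]
  linarith
end

section
/- Let W_1, …, W_p be real random variables, H0 ⊆ {1, …, p} a fixed set of null indices, and t > 0 a fixed (deterministic) threshold. Assume that almost surely W_j ≠ 0 for all j ∈ H0, and that conditionally on the magnitudes (|W_1|, …, |W_p|) and on (W_j)_{j ∉ H0}, the signs (sign(W_j))_{j ∈ H0} are i.i.d. uniform on {−1, +1}. Then E[ #{j ∈ H0 : W_j ≥ t} / (1 + #{j ∈ H0 : W_j ≤ −t}) ] ≤ 1. -/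
/-!
Flipping the signs of any subset `S` of the nulls leaves the law of `W`, hence the expectation,
unchanged, so it suffices to bound the average of the ratio over the `2 ^ #H0` flips pointwise.
For a fixed `w` only the nulls `B` with `t ≤ |w j|` are counted, and as `S` ranges over the
subsets of `H0` the set of negative ones among them runs `2 ^ #(H0 \ B)` times through every
`A ⊆ B`. The average is therefore `2 ^ (-#B) * ∑_{A ⊆ B} #(B \ A) / (1 + #A)`, and this sum is
`∑_k C(n, k) (n - k) / (k + 1) = ∑_k C(n, k + 1) = 2 ^ n - 1` with `n = #B`.
-/

open MeasureTheory Finset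
open scoped symmDiff

/-- The **null sign-flip hypothesis** on knockoff statistics `W = (W_1, …, W_p)` with
null set `H0`: conditionally on the magnitudes `(|W_1|, …, |W_p|)` and on the values
`(W_j)_{j ∉ H0}`, the signs `(sign W_j)_{j ∈ H0}` are i.i.d. uniform on `{−1, +1}`.
Equivalently (and this is the form stated here), for every deterministic sign vector
`ε ∈ {−1,+1}^p` with `ε_j = 1` for all `j ∉ H0`, the flipped vector
`(ε_j W_j)_{j}` has the same joint distribution as `(W_j)_j`. -/
def NullSignFlip {Ω : Type*} [MeasurableSpace Ω] (P : Measure Ω) {p : ℕ}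
    (W : Fin p → Ω → ℝ) (H0 : Finset (Fin p)) : Prop :=
  ∀ ε : Fin p → ℝ, (∀ j, ε j = 1 ∨ ε j = -1) → (∀ j ∉ H0, ε j = 1) →
    Measure.map (fun ω (j : Fin p) => ε j * W j ω) P =
      Measure.map (fun ω (j : Fin p) => W j ω) P

namespace Finset

variable {α β : Type*} [DecidableEq α]

theorem sum_powerset_symmDiff [AddCommMonoid β] {U N : Finset α} (hN : N ⊆ U)
    (f : Finset α → β) : ∑ S ∈ U.powerset, f (S ∆ N) = ∑ S ∈ U.powerset, f S := by
  have hmaps : ∀ S ∈ U.powerset, S ∆ N ∈ U.powerset := fun S hS =>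
    mem_powerset.2 <| symmDiff_le (le_sup_of_le_right (mem_powerset.1 hS))
      (le_sup_of_le_right hN)
  exact sum_nbij' (· ∆ N) (· ∆ N) hmaps hmaps (fun S _ => symmDiff_symmDiff_cancel_right N S)
    (fun S _ => symmDiff_symmDiff_cancel_right N S) fun _ _ => rfl

theorem sum_powerset_inter [AddCommMonoid β] {B U : Finset α} (hB : B ⊆ U)
    (f : Finset α → β) :
    ∑ S ∈ U.powerset, f (B ∩ S) = 2 ^ #(U \ B) • ∑ A ∈ B.powerset, f A := by
  suffices ∀ C : Finset α, Disjoint B C →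
      ∑ S ∈ (B ∪ C).powerset, f (B ∩ S) = 2 ^ #C • ∑ A ∈ B.powerset, f A by
    simpa [union_sdiff_of_subset hB] using this (U \ B) disjoint_sdiff
  intro C hC
  induction C using Finset.induction_on with
  | empty =>
    simp only [union_empty, card_empty, pow_zero, one_smul]
    exact sum_congr rfl fun A hA => by rw [inter_eq_right.2 (mem_powerset.1 hA)]
  | insert a C ha ih =>
    have haB : a ∉ B := disjoint_right.1 hC (mem_insert_self a C)
    rw [union_insert, sum_powerset_insert (by simp [ha, haB])]
    simp only [inter_insert_of_notMem haB]
    rw [ih (disjoint_of_subset_right (subset_insert a C) hC), card_insert_of_notMem ha,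
      ← two_nsmul, smul_smul, pow_succ']

theorem sum_powerset_card_sdiff_div_le (B : Finset α) :
    ∑ A ∈ B.powerset, (#(B \ A) : ℝ) / (1 + #A) ≤ 2 ^ #B := by
  have hchoose : ∀ n k : ℕ, (n.choose k : ℝ) * ((n - k : ℕ) / (1 + k)) = n.choose (k + 1) := by
    intro n k
    have := congrArg (Nat.cast : ℕ → ℝ) (Nat.choose_succ_right_eq n k)
    push_cast at this
    field_simp
    linarith
  calc ∑ A ∈ B.powerset, (#(B \ A) : ℝ) / (1 + #A)
      = ∑ A ∈ B.powerset, ((#B - #A : ℕ) : ℝ) / (1 + #A) :=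
        sum_congr rfl fun A hA => by rw [card_sdiff_of_subset (mem_powerset.1 hA)]
    _ = ∑ k ∈ range (#B + 1), ((#B).choose (k + 1) : ℝ) := by
        rw [sum_powerset_apply_card (fun k => ((#B - k : ℕ) : ℝ) / (1 + k))]
        simp only [nsmul_eq_mul, hchoose]
    _ ≤ ∑ k ∈ range (#B + 1), ((#B).choose (k + 1) : ℝ) + (#B).choose 0 := by simp
    _ = 2 ^ #B := by
        rw [← sum_range_succ' (fun k => ((#B).choose k : ℝ)), sum_range_succ, Nat.choose_succ_self]
        exact_mod_cast by simp [Nat.sum_range_choose]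

end Finset

theorem measurable_card_filter {α ι : Type*} [MeasurableSpace α] (s : Finset ι)
    {q : ι → α → Prop} [∀ j a, Decidable (q j a)] (hq : ∀ j, MeasurableSet {a | q j a}) :
    Measurable fun a => (#{j ∈ s | q j a} : ℝ) := by
  simp_rw [card_filter]
  push_cast
  exact measurable_sum _ fun j _ => Measurable.ite (hq j) measurable_const measurable_const

section NullRatio

variable {ι : Type*}

noncomputable def nullRatio (H0 : Finset ι) (t : ℝ) (w : ι → ℝ) : ℝ :=
  (#{j ∈ H0 | t ≤ w j} : ℝ) / (1 + #{j ∈ H0 | w j ≤ -t})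

theorem nullRatio_nonneg (H0 : Finset ι) (t : ℝ) (w : ι → ℝ) : 0 ≤ nullRatio H0 t w := by
  unfold nullRatio; positivity

theorem nullRatio_le_card (H0 : Finset ι) (t : ℝ) (w : ι → ℝ) : nullRatio H0 t w ≤ #H0 :=
  (div_le_self (by positivity) (by simp)).trans (mod_cast card_filter_le _ _)

theorem measurable_nullRatio (H0 : Finset ι) (t : ℝ) : Measurable (nullRatio H0 t) :=
  (measurable_card_filter H0 fun j => measurableSet_le measurable_const (measurable_pi_apply j)).div
    (measurable_const.add <| measurable_card_filter H0 fun j =>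
      measurableSet_le (measurable_pi_apply j) measurable_const)

theorem integrable_nullRatio_comp {Ω : Type*} [MeasurableSpace Ω] {P : Measure Ω}
    [IsFiniteMeasure P] (H0 : Finset ι) (t : ℝ) {g : Ω → ι → ℝ} (hg : Measurable g) :
    Integrable (fun ω => nullRatio H0 t (g ω)) P :=
  .of_bound ((measurable_nullRatio H0 t).comp hg).aestronglyMeasurable #H0 <| ae_of_all _
    fun ω => by rw [Real.norm_of_nonneg (nullRatio_nonneg ..)]; exact nullRatio_le_card ..

end NullRatio

section SignFlip

variable {ι : Type*} [DecidableEq ι]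

def signFlip (S : Finset ι) (w : ι → ℝ) : ι → ℝ := fun j => if j ∈ S then -w j else w j

theorem measurable_signFlip (S : Finset ι) : Measurable (signFlip S) :=
  measurable_pi_lambda _ fun j => by
    by_cases hj : j ∈ S <;> simp only [signFlip, hj, if_true, if_false] <;> fun_prop

variable {H0 : Finset ι} {t : ℝ}

theorem filter_le_signFlip (ht : 0 < t) (S : Finset ι) (w : ι → ℝ) :
    {j ∈ H0 | t ≤ signFlip S w j} = {j ∈ H0 | t ≤ |w j|} \ (S ∆ {j ∈ H0 | w j < 0}) := by
  ext j
  simp only [mem_filter, mem_sdiff, mem_symmDiff, signFlip]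
  grind [abs_of_neg, abs_of_nonneg]

theorem filter_signFlip_le (ht : 0 < t) (S : Finset ι) (w : ι → ℝ) :
    {j ∈ H0 | signFlip S w j ≤ -t} = {j ∈ H0 | t ≤ |w j|} ∩ (S ∆ {j ∈ H0 | w j < 0}) := by
  ext j
  simp only [mem_filter, mem_inter, mem_symmDiff, signFlip]
  grind [abs_of_neg, abs_of_nonneg]

theorem sum_nullRatio_signFlip_le (ht : 0 < t) (w : ι → ℝ) :
    ∑ S ∈ H0.powerset, nullRatio H0 t (signFlip S w) ≤ 2 ^ #H0 := by
  set B := {j ∈ H0 | t ≤ |w j|}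
  set N := {j ∈ H0 | w j < 0}
  have hB : B ⊆ H0 := filter_subset _ _
  calc ∑ S ∈ H0.powerset, nullRatio H0 t (signFlip S w)
      = ∑ S ∈ H0.powerset, (#(B \ (B ∩ (S ∆ N))) : ℝ) / (1 + #(B ∩ (S ∆ N))) :=
        sum_congr rfl fun S _ => by
          rw [nullRatio, filter_le_signFlip ht, filter_signFlip_le ht, sdiff_inter_self_left]
    _ = ∑ S ∈ H0.powerset, (#(B \ (B ∩ S)) : ℝ) / (1 + #(B ∩ S)) :=
        sum_powerset_symmDiff (filter_subset _ _) fun X => (#(B \ (B ∩ X)) : ℝ) / (1 + #(B ∩ X))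
    _ = 2 ^ #(H0 \ B) • ∑ A ∈ B.powerset, (#(B \ A) : ℝ) / (1 + #A) :=
        sum_powerset_inter hB fun A => (#(B \ A) : ℝ) / (1 + #A)
    _ ≤ 2 ^ #(H0 \ B) • (2 : ℝ) ^ #B := by gcongr; exact sum_powerset_card_sdiff_div_le B
    _ = 2 ^ #H0 := by
        rw [nsmul_eq_mul, Nat.cast_pow, Nat.cast_ofNat, ← pow_add, card_sdiff_add_card_eq_card hB]

end SignFlip

namespace NullSignFlip

variable {Ω : Type*} [MeasurableSpace Ω] {P : Measure Ω} {p : ℕ} {W : Fin p → Ω → ℝ}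
  {H0 : Finset (Fin p)}

theorem map_signFlip (hflip : NullSignFlip P W H0) {S : Finset (Fin p)} (hS : S ⊆ H0) :
    P.map (fun ω => signFlip S fun j => W j ω) = P.map fun ω j => W j ω := by
  convert hflip (fun j => if j ∈ S then -1 else 1)
    (fun j => by by_cases hj : j ∈ S <;> simp [hj]) (fun j hj => if_neg fun h => hj (hS h))
    using 3 with ω
  funext j
  by_cases hj : j ∈ S <;> simp [signFlip, hj]

theorem integral_comp_signFlip (hflip : NullSignFlip P W H0) (hmeas : ∀ j, Measurable (W j))
    {S : Finset (Fin p)} (hS : S ⊆ H0) {f : (Fin p → ℝ) → ℝ} (hf : Measurable f) :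
    ∫ ω, f (signFlip S fun j => W j ω) ∂P = ∫ ω, f (fun j => W j ω) ∂P := by
  have hW : Measurable fun ω j => W j ω := measurable_pi_lambda _ hmeas
  have hflipW : Measurable fun ω => signFlip S fun j => W j ω := (measurable_signFlip S).comp hW
  rw [← integral_map hflipW.aemeasurable hf.aestronglyMeasurable,
    hflip.map_signFlip hS, integral_map hW.aemeasurable hf.aestronglyMeasurable]

end NullSignFlip

theorem null_ratio_expectation_le_one_general {Ω : Type*} [MeasurableSpace Ω]
    (P : Measure Ω) [IsProbabilityMeasure P] {p : ℕ}
    (W : Fin p → Ω → ℝ) (hmeas : ∀ j, Measurable (W j))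
    (H0 : Finset (Fin p)) (t : ℝ) (ht : 0 < t)
    (hflip : NullSignFlip P W H0) :
    ∫ ω, ((H0.filter fun j => t ≤ W j ω).card : ℝ) /
        (1 + ((H0.filter fun j => W j ω ≤ -t).card : ℝ)) ∂P ≤ 1 := by
  change ∫ ω, nullRatio H0 t (fun j => W j ω) ∂P ≤ 1
  have hint : ∀ S : Finset (Fin p),
      Integrable (fun ω => nullRatio H0 t (signFlip S fun j => W j ω)) P := fun S =>
    integrable_nullRatio_comp H0 t <| (measurable_signFlip S).comp (measurable_pi_lambda _ hmeas)
  have hsum : (2 : ℝ) ^ #H0 * ∫ ω, nullRatio H0 t (fun j => W j ω) ∂P ≤ 2 ^ #H0 * 1 :=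
    calc (2 : ℝ) ^ #H0 * ∫ ω, nullRatio H0 t (fun j => W j ω) ∂P
        = ∑ S ∈ H0.powerset, ∫ ω, nullRatio H0 t (signFlip S fun j => W j ω) ∂P := by
          rw [sum_congr rfl fun S hS => hflip.integral_comp_signFlip hmeas (mem_powerset.1 hS)
            (measurable_nullRatio H0 t), sum_const, card_powerset, nsmul_eq_mul,
            Nat.cast_pow, Nat.cast_ofNat]
      _ = ∫ ω, ∑ S ∈ H0.powerset, nullRatio H0 t (signFlip S fun j => W j ω) ∂P :=
          (integral_finsetSum _ fun S _ => hint S).symm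
      _ ≤ ∫ _, (2 : ℝ) ^ #H0 ∂P :=
          integral_mono (integrable_finsetSum _ fun S _ => hint S) (integrable_const _)
            fun ω => sum_nullRatio_signFlip_le ht _
      _ = 2 ^ #H0 * 1 := by simp
  exact le_of_mul_le_mul_left hsum (by positivity)

/-- **Fixed-threshold expectation bound on null knockoff statistics.**
Let `W_1, …, W_p` be real random variables, `H0 ⊆ {1, …, p}` a fixed set of null
indices, and `t > 0` a fixed (deterministic) threshold.  Assume that almost surely
`W_j ≠ 0` for all `j ∈ H0`, and that conditionally on the magnitudes
`(|W_1|, …, |W_p|)` and on `(W_j)_{j ∉ H0}`, the signs `(sign W_j)_{j ∈ H0}` are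
i.i.d. uniform on `{−1, +1}` (formalized by the sign-flip property `NullSignFlip`).
Then `E[ #{j ∈ H0 : W_j ≥ t} / (1 + #{j ∈ H0 : W_j ≤ −t}) ] ≤ 1`. -/
theorem null_ratio_expectation_le_one {Ω : Type*} [MeasurableSpace Ω]
    (P : Measure Ω) [IsProbabilityMeasure P] {p : ℕ}
    (W : Fin p → Ω → ℝ) (hmeas : ∀ j, Measurable (W j))
    (H0 : Finset (Fin p)) (t : ℝ) (ht : 0 < t)
    (hnz : ∀ᵐ ω ∂P, ∀ j ∈ H0, W j ω ≠ 0)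
    (hflip : NullSignFlip P W H0) :
    ∫ ω, ((H0.filter fun j => t ≤ W j ω).card : ℝ) /
        (1 + ((H0.filter fun j => W j ω ≤ -t).card : ℝ)) ∂P ≤ 1 :=
  null_ratio_expectation_le_one_general P W hmeas H0 t ht hflip
end

section
/- Let Σ be a real symmetric positive definite p×p matrix and S a real symmetric positive semidefinite p×p matrix. Then 2S − S Σ⁻¹ S is positive semidefinite if and only if 2Σ − S is positive semidefinite. -/
/-!
`2S − SΣ⁻¹S` is the Schur complement of `Σ` in `M = [[Σ, S], [S, 2S]]`, so it is positive
semidefinite iff `M` is. The substitution `(x, y) ↦ (x, x + 2y)` turns `M` into the block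
diagonal `diag(Σ − S/2, S/2)`, and since `S ⪰ 0` this is positive semidefinite iff `2Σ − S` is.
-/

open Matrix

namespace Matrix

variable {m n : Type*} [Fintype m] [Fintype n]

theorem posSemidef_fromBlocks_zero_iff {R : Type*} [CommRing R] [PartialOrder R] [StarRing R]
    [AddLeftMono R] {A : Matrix m m R} {D : Matrix n n R} :
    (fromBlocks A 0 0 D).PosSemidef ↔ A.PosSemidef ∧ D.PosSemidef := by
  refine ⟨fun h => ⟨h.submatrix Sum.inl, h.submatrix Sum.inr⟩,
    fun ⟨hA, hD⟩ => .of_dotProduct_mulVec_nonneg ?_ fun v => ?_⟩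
  · simp [IsHermitian, fromBlocks_conjTranspose, hA.isHermitian.eq, hD.isHermitian.eq]
  · obtain ⟨x, y, rfl⟩ : ∃ x y, v = Sum.elim x y := ⟨_, _, (Sum.elim_comp_inl_inr v).symm⟩
    simpa [fromBlocks_mulVec, Function.star_sumElim, sumElim_dotProduct_sumElim]
      using add_nonneg (hA.dotProduct_mulVec_nonneg x) (hD.dotProduct_mulVec_nonneg y)

omit [Fintype n] in
open scoped ComplexOrder in
theorem posSemidef_smul_iff {𝕜 : Type*} [RCLike 𝕜] {A : Matrix n n 𝕜} {c : ℝ} (hc : 0 < c) :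
    (c • A).PosSemidef ↔ A.PosSemidef := by
  refine ⟨fun h => ?_, fun h => h.smul hc.le⟩
  simpa [smul_smul, hc.ne'] using h.smul (inv_pos.mpr hc).le

theorem fromBlocks_two_smul_eq_conjTranspose_mul_mul {K : Type*} [Field K] [StarRing K]
    [DecidableEq n] [NeZero (2 : K)] (A B : Matrix n n K) :
    fromBlocks A B B ((2 : K) • B) =
      (fromBlocks 1 0 1 ((2 : K) • 1))ᴴ * fromBlocks (A - (2⁻¹ : K) • B) 0 0 ((2⁻¹ : K) • B) *
        fromBlocks 1 0 1 ((2 : K) • 1) := by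
  simp [fromBlocks_conjTranspose, fromBlocks_multiply, smul_smul, two_ne_zero]

theorem posSemidef_fromBlocks_two_smul_iff [DecidableEq n] {A B : Matrix n n ℝ}
    (hB : B.PosSemidef) :
    (fromBlocks A B B ((2 : ℝ) • B)).PosSemidef ↔ ((2 : ℝ) • A - B).PosSemidef := by
  have hP : IsUnit (fromBlocks 1 0 1 ((2 : ℝ) • 1) : Matrix (n ⊕ n) (n ⊕ n) ℝ) := by
    simp [isUnit_iff_isUnit_det]
  rw [fromBlocks_two_smul_eq_conjTranspose_mul_mul, ← star_eq_conjTranspose,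
    hP.posSemidef_star_left_conjugate_iff, posSemidef_fromBlocks_zero_iff,
    ← posSemidef_smul_iff (A := A - _) two_pos]
  simp [hB.smul, smul_sub, smul_smul]

end Matrix

/-- **Admissibility of the knockoff conditional covariance.**
Let `Σ` be a real symmetric positive definite `p×p` matrix and `S` a real symmetric
positive semidefinite `p×p` matrix.  Then `2S − S Σ⁻¹ S` is positive semidefinite
if and only if `2Σ − S` is positive semidefinite. -/
theorem knockoff_condCov_posSemidef_iff {p : ℕ} (Sig S : Matrix (Fin p) (Fin p) ℝ)
    (hSig : Sig.PosDef) (hS : S.PosSemidef) :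
    ((2 : ℝ) • S - S * Sig⁻¹ * S).PosSemidef ↔ ((2 : ℝ) • Sig - S).PosSemidef := by
  have := hSig.isUnit.invertible
  have hSchur := hSig.fromBlocks₁₁ S ((2 : ℝ) • S)
  rw [hS.isHermitian.eq] at hSchur
  rw [← hSchur, posSemidef_fromBlocks_two_smul_iff hS]
end

section
/- Let Σ be a real symmetric positive definite p×p matrix with smallest eigenvalue λ_min(Σ), and let s be a real number with 0 ≤ s ≤ 2 λ_min(Σ). Then 2Σ − sI is positive semidefinite, and consequently the joint knockoff covariance matrix G = [[Σ, Σ−sI],[Σ−sI, Σ]] is positive semidefinite. -/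
/-!
Split `Σ = M + N` with `M = Σ - (s/2) I` and `N = (s/2) I`. Both are positive semidefinite:
`N` because `s ≥ 0`, and `M` because, in an eigenbasis of `Σ`, it is diagonal with entries
`λᵢ - s/2 ≥ 0`. Then `2Σ - sI = 2M`, and with `P = [I; I]`, `Q = [I; -I]` the joint covariance is
`[[M + N, M - N], [M - N, M + N]] = P M Pᴴ + Q N Qᴴ`.
-/

open Matrix
open scoped ComplexOrder

namespace Matrix

variable {n R 𝕜 : Type*} [Fintype n] [DecidableEq n]

theorem PosSemidef.fromBlocks_add_sub [Ring R] [PartialOrder R] [StarRing R] [AddLeftMono R]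
    {M N : Matrix n n R} (hM : M.PosSemidef) (hN : N.PosSemidef) :
    (fromBlocks (M + N) (M - N) (M - N) (M + N)).PosSemidef := by
  set P : Matrix (n ⊕ n) n R := fromRows 1 1
  set Q : Matrix (n ⊕ n) n R := fromRows 1 (-1)
  have hsum : fromBlocks (M + N) (M - N) (M - N) (M + N) = P * M * Pᴴ + Q * N * Qᴴ := by
    simp only [P, Q, conjTranspose_fromRows_eq_fromCols_conjTranspose, conjTranspose_one,
      conjTranspose_neg, fromRows_mul, Matrix.one_mul, Matrix.neg_mul]
    simp only [mul_fromCols, Matrix.mul_one, Matrix.mul_neg, fromCols_neg, neg_neg,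
      fromRows_fromCols_eq_fromBlocks, fromBlocks_add, ← sub_eq_add_neg]
  rw [hsum]
  exact (hM.mul_mul_conjTranspose_same P).add (hN.mul_mul_conjTranspose_same Q)

theorem IsHermitian.posSemidef_sub_smul_one_of_le_eigenvalues [RCLike 𝕜] {A : Matrix n n 𝕜}
    (hA : A.IsHermitian) {c : ℝ} (hc : ∀ i, c ≤ hA.eigenvalues i) :
    (A - c • (1 : Matrix n n 𝕜)).PosSemidef := by
  have hdiag : diagonal (RCLike.ofReal ∘ fun i => hA.eigenvalues i - c) =
      diagonal (RCLike.ofReal ∘ hA.eigenvalues) - c • (1 : Matrix n n 𝕜) := by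
    ext i j
    rcases eq_or_ne i j with rfl | hij
    · simp [Algebra.algebraMap_eq_smul_one, sub_smul]
    · simp [hij]
  have hshift : A - c • (1 : Matrix n n 𝕜) = Unitary.conjStarAlgAut 𝕜 _ hA.eigenvectorUnitary
      (diagonal (RCLike.ofReal ∘ fun i => hA.eigenvalues i - c)) := by
    conv_lhs => rw [hA.spectral_theorem]
    rw [hdiag, map_sub, LinearMapClass.map_smul_of_tower, map_one]
  rw [hshift, Unitary.conjStarAlgAut_apply, Unitary.isUnit_coe.posSemidef_star_right_conjugate_iff,
    posSemidef_diagonal_iff]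
  intro i
  simpa using hc i

end Matrix

/-- **Validity of the equi-correlated knockoff construction.**
Let `Σ` be a real symmetric positive definite `p×p` matrix with smallest eigenvalue
`λ_min(Σ)`, and let `s` be a real number with `0 ≤ s ≤ 2 λ_min(Σ)` (equivalently,
`s ≤ 2 λ` for every eigenvalue `λ` of `Σ`).  Then `2Σ − sI` is positive semidefinite,
and consequently the joint knockoff covariance matrix
`G = [[Σ, Σ−sI],[Σ−sI, Σ]]` is positive semidefinite. -/
theorem equicorrelated_knockoff_posSemidef {p : ℕ} (Sig : Matrix (Fin p) (Fin p) ℝ)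
    (hSig : Sig.PosDef) (s : ℝ) (hs0 : 0 ≤ s)
    (hs : ∀ i, s ≤ 2 * hSig.1.eigenvalues i) :
    ((2 : ℝ) • Sig - s • (1 : Matrix (Fin p) (Fin p) ℝ)).PosSemidef ∧
      (Matrix.fromBlocks Sig (Sig - s • (1 : Matrix (Fin p) (Fin p) ℝ))
        (Sig - s • (1 : Matrix (Fin p) (Fin p) ℝ)) Sig).PosSemidef := by
  set M := Sig - (s / 2) • (1 : Matrix (Fin p) (Fin p) ℝ)
  set N := (s / 2) • (1 : Matrix (Fin p) (Fin p) ℝ)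
  have hM : M.PosSemidef :=
    hSig.1.posSemidef_sub_smul_one_of_le_eigenvalues fun i => by linarith [hs i]
  have hN : N.PosSemidef := PosSemidef.one.smul (by positivity)
  have htwice : (2 : ℝ) • Sig - s • (1 : Matrix (Fin p) (Fin p) ℝ) = (2 : ℝ) • M := by
    rw [smul_sub, smul_smul, mul_div_cancel₀ s two_ne_zero]
  have hsum : M + N = Sig := sub_add_cancel _ _
  have hdiff : M - N = Sig - s • (1 : Matrix (Fin p) (Fin p) ℝ) := by
    rw [sub_sub, ← add_smul, add_halves]
  refine ⟨htwice ▸ hM.smul zero_le_two, ?_⟩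
  simpa only [hsum, hdiff] using hM.fromBlocks_add_sub hN
end

section
/- Let Σ be a real symmetric p×p matrix, S a real diagonal p×p matrix, and G the 2p×2p block matrix G = [[Σ, Σ−S],[Σ−S, Σ]]. For any subset A ⊆ {1, …, p}, let P_A be the 2p×2p permutation matrix of the permutation that swaps index j with index p + j for every j ∈ A and fixes all other indices. Then P_Aᵀ G P_A = G. -/
/-! Conjugating by a permutation matrix permutes rows and columns. If both coordinates of an
entry are swapped, or neither, the entry stays in a block of the same kind. If exactly one is
swapped, the entry moves between a block `Sig` and a block `Sig - S` at a position `(a, b)` with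
`a ≠ b`, where the two agree because `S` is diagonal. -/

open Matrix

/-- The coordinate-swap map on `Fin p ⊕ Fin p` exchanging `j` (an "original"
coordinate, `Sum.inl j`) with `p + j` (its "knockoff" counterpart, `Sum.inr j`)
for every `j ∈ A`, and fixing all other indices. -/
def knockoffSwapFun {p : ℕ} (A : Finset (Fin p)) : Fin p ⊕ Fin p → Fin p ⊕ Fin p
  | .inl j => if j ∈ A then .inr j else .inl j
  | .inr j => if j ∈ A then .inl j else .inr j

theorem knockoffSwapFun_involutive {p : ℕ} (A : Finset (Fin p)) :
    Function.Involutive (knockoffSwapFun A) := by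
  rintro (j | j) <;> by_cases h : j ∈ A <;> simp [knockoffSwapFun, h]

/-- The permutation of `{1,…,2p}` (modelled as `Fin p ⊕ Fin p`) swapping index `j`
with index `p + j` for every `j ∈ A` and fixing all other indices. -/
def knockoffSwapPerm {p : ℕ} (A : Finset (Fin p)) : Equiv.Perm (Fin p ⊕ Fin p) :=
  (knockoffSwapFun_involutive A).toPerm

theorem Matrix.transpose_permMatrix_mul_mul_permMatrix {n R : Type*} [DecidableEq n] [Fintype n]
    [NonAssocSemiring R] (σ : Equiv.Perm n) (M : Matrix n n R) :
    (σ.permMatrix R)ᵀ * M * σ.permMatrix R = M.submatrix σ.symm σ.symm := by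
  rw [transpose_permMatrix, PEquiv.toMatrix_toPEquiv_mul, PEquiv.mul_toMatrix_toPEquiv,
    submatrix_submatrix]
  rfl

@[simp]
theorem knockoffSwapPerm_inl {p : ℕ} (A : Finset (Fin p)) (j : Fin p) :
    knockoffSwapPerm A (.inl j) = if j ∈ A then .inr j else .inl j :=
  rfl

@[simp]
theorem knockoffSwapPerm_inr {p : ℕ} (A : Finset (Fin p)) (j : Fin p) :
    knockoffSwapPerm A (.inr j) = if j ∈ A then .inl j else .inr j :=
  rfl

@[simp]
theorem knockoffSwapPerm_symm {p : ℕ} (A : Finset (Fin p)) :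
    (knockoffSwapPerm A).symm = knockoffSwapPerm A :=
  rfl

theorem fromBlocks_sub_submatrix_knockoffSwapPerm {α : Type*} [AddGroup α] {p : ℕ}
    (Sig S : Matrix (Fin p) (Fin p) α) (hS : S.IsDiag) (A : Finset (Fin p)) :
    (fromBlocks Sig (Sig - S) (Sig - S) Sig).submatrix (knockoffSwapPerm A) (knockoffSwapPerm A) =
      fromBlocks Sig (Sig - S) (Sig - S) Sig := by
  have S_apply_eq_zero {a b : Fin p} (h : (a ∈ A) ≠ (b ∈ A)) : S a b = 0 :=
    hS fun hab ↦ h (hab ▸ rfl)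
  ext (a | a) (b | b) <;> by_cases ha : a ∈ A <;> by_cases hb : b ∈ A <;>
    simp [ha, hb, S_apply_eq_zero]

theorem knockoff_jointCov_swap_invariant_general {p : ℕ} (Sig S : Matrix (Fin p) (Fin p) ℝ)
    (hS : S.IsDiag) (A : Finset (Fin p)) :
    ((knockoffSwapPerm A).permMatrix ℝ)ᵀ *
        Matrix.fromBlocks Sig (Sig - S) (Sig - S) Sig *
        ((knockoffSwapPerm A).permMatrix ℝ) =
      Matrix.fromBlocks Sig (Sig - S) (Sig - S) Sig := by
  rw [transpose_permMatrix_mul_mul_permMatrix, knockoffSwapPerm_symm]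
  exact fromBlocks_sub_submatrix_knockoffSwapPerm Sig S hS A

/-- **Swap-invariance of the joint knockoff covariance matrix.**
Let `Σ` be a real symmetric `p×p` matrix, `S` a real diagonal `p×p` matrix, and `G`
the `2p×2p` block matrix `G = [[Σ, Σ−S],[Σ−S, Σ]]`.  For any subset
`A ⊆ {1,…,p}`, let `P_A` be the `2p×2p` permutation matrix of the permutation that
swaps index `j` with index `p+j` for every `j ∈ A` and fixes all other indices.
Then `P_Aᵀ G P_A = G`. -/
theorem knockoff_jointCov_swap_invariant {p : ℕ} (Sig S : Matrix (Fin p) (Fin p) ℝ)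
    (hSig : Sig.IsSymm) (hS : S.IsDiag) (A : Finset (Fin p)) :
    ((knockoffSwapPerm A).permMatrix ℝ)ᵀ *
        Matrix.fromBlocks Sig (Sig - S) (Sig - S) Sig *
        ((knockoffSwapPerm A).permMatrix ℝ) =
      Matrix.fromBlocks Sig (Sig - S) (Sig - S) Sig :=
  knockoff_jointCov_swap_invariant_general Sig S hS A
end

section
/- Let Σ be a real symmetric invertible p×p matrix, S a real symmetric p×p matrix, and L a real p×p matrix with L Lᵀ = 2S − S Σ⁻¹ S. Let T be the 2p×2p block matrix T = [[I, 0],[I − SΣ⁻¹, L]] and G₀ = [[Σ, 0],[0, I]]. Then T G₀ Tᵀ = [[Σ, Σ−S],[Σ−S, Σ]]. -/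
/-! Multiplying out blockwise, the off-diagonal blocks of `T G₀ Tᵀ` are `(I - SΣ⁻¹)Σ = Σ - S`
(using the symmetry of `Σ` and `S` for the transpose), and the lower-right block is
`(Σ - S)(I - Σ⁻¹S) + LLᵀ = Σ - 2S + SΣ⁻¹S + LLᵀ`, which is `Σ` precisely because of the
defining equation of `L`. -/

open Matrix

namespace Matrix

variable {m n k R : Type*} [CommRing R]

theorem fromBlocks_one_zero_mul_fromBlocks_mul_transpose [Fintype m] [Fintype k]
    [DecidableEq m] [DecidableEq k] (A : Matrix m m R) (C : Matrix n m R) (L : Matrix n k R) :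
    fromBlocks (1 : Matrix m m R) 0 C L * fromBlocks A 0 0 (1 : Matrix k k R) *
        (fromBlocks (1 : Matrix m m R) 0 C L)ᵀ =
      fromBlocks A (A * Cᵀ) (C * A) (C * A * Cᵀ + L * Lᵀ) := by
  simp [fromBlocks_transpose, fromBlocks_multiply]

variable [Fintype n] [DecidableEq n] {A : Matrix n n R} (S : Matrix n n R)

theorem transpose_one_sub_mul_nonsing_inv (hA : A.IsSymm) (hS : S.IsSymm) :
    (1 - S * A⁻¹)ᵀ = 1 - A⁻¹ * S := by
  rw [transpose_sub, transpose_one, transpose_mul, transpose_nonsing_inv, hA.eq, hS.eq]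

theorem one_sub_mul_nonsing_inv_mul (hA : IsUnit A.det) : (1 - S * A⁻¹) * A = A - S := by
  rw [Matrix.sub_mul, Matrix.one_mul, Matrix.mul_assoc, nonsing_inv_mul _ hA, Matrix.mul_one]

theorem mul_one_sub_nonsing_inv_mul (hA : IsUnit A.det) : A * (1 - A⁻¹ * S) = A - S := by
  rw [Matrix.mul_sub, Matrix.mul_one, ← Matrix.mul_assoc, mul_nonsing_inv _ hA, Matrix.one_mul]

theorem sub_mul_one_sub_nonsing_inv_mul (hA : IsUnit A.det) :
    (A - S) * (1 - A⁻¹ * S) = A - (2 : R) • S + S * A⁻¹ * S := by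
  rw [Matrix.sub_mul, mul_one_sub_nonsing_inv_mul S hA, Matrix.mul_sub, Matrix.mul_one,
    Matrix.mul_assoc, two_smul]
  abel

end Matrix

/-- **Covariance correctness of the Gaussian knockoff sampling map.**
Let `Σ` be a real symmetric invertible `p×p` matrix, `S` a real symmetric `p×p`
matrix, and `L` a real `p×p` matrix with `L Lᵀ = 2S − S Σ⁻¹ S`.  Let `T` be the
`2p×2p` block matrix `T = [[I, 0],[I − SΣ⁻¹, L]]` and `G₀ = [[Σ, 0],[0, I]]`.
Then `T G₀ Tᵀ = [[Σ, Σ−S],[Σ−S, Σ]]`. -/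
theorem knockoff_sampling_covariance {p : ℕ} (Sig S L : Matrix (Fin p) (Fin p) ℝ)
    (hSig : Sig.IsSymm) (hSigInv : IsUnit Sig.det) (hS : S.IsSymm)
    (hL : L * Lᵀ = (2 : ℝ) • S - S * Sig⁻¹ * S) :
    Matrix.fromBlocks 1 0 (1 - S * Sig⁻¹) L *
        Matrix.fromBlocks Sig 0 0 1 *
        (Matrix.fromBlocks 1 0 (1 - S * Sig⁻¹) L)ᵀ =
      Matrix.fromBlocks Sig (Sig - S) (Sig - S) Sig := by
  rw [fromBlocks_one_zero_mul_fromBlocks_mul_transpose,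
    transpose_one_sub_mul_nonsing_inv S hSig hS, mul_one_sub_nonsing_inv_mul S hSigInv,
    one_sub_mul_nonsing_inv_mul S hSigInv, sub_mul_one_sub_nonsing_inv_mul S hSigInv, hL]
  congr 1
  abel
end

section
/- Let p be a positive integer, Σ a real symmetric positive definite p×p matrix, S a real symmetric positive semidefinite p×p matrix with 2Σ − S positive semidefinite, and L a real p×p matrix with L Lᵀ = 2S − S Σ⁻¹ S. Let X be a random vector in ℝ^p with the multivariate Gaussian distribution of mean 0 and covariance Σ, and U an independent random vector in ℝ^p with the standard multivariate Gaussian distribution (mean 0, identity covariance). Define X̃ = (I − SΣ⁻¹) X + L U. Then the joint random vector (X, X̃) in ℝ^{2p} has the multivariate Gaussian distribution with mean 0 and covariance G = [[Σ, Σ−S],[Σ−S, Σ]]. -/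
/-! With `A = [I; I - SΣ⁻¹]` and `B = [0; L]` the pair `(X, X̃)` is `A X + B U`. Each linear
functional `a ⬝ᵥ (A X + B U) = (Aᵀ a) ⬝ᵥ X + (Bᵀ a) ⬝ᵥ U` is a sum of two independent centred
real Gaussians, hence Gaussian with variance `aᵀ (A Σ Aᵀ + B Bᵀ) a`; the defining equation of
`L Lᵀ` is exactly what turns `A Σ Aᵀ + B Bᵀ` into `[[Σ, Σ - S], [Σ - S, Σ]]`. -/

open MeasureTheory Matrix

/-- `ν` is the multivariate Gaussian measure on `ℝ^d` (modelled as `d → ℝ`) with mean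
vector `m` and covariance matrix `G`, characterized (Cramér–Wold) by the requirement
that every linear functional `x ↦ ∑ i, a i * x i` pushes `ν` forward to the real
Gaussian with mean `⟪a, m⟫` and variance `aᵀ G a`. -/
def IsMultivariateGaussian {d : Type*} [Fintype d] (ν : Measure (d → ℝ))
    (m : d → ℝ) (G : Matrix d d ℝ) : Prop :=
  IsProbabilityMeasure ν ∧
    ∀ a : d → ℝ,
      Measure.map (fun x => ∑ i, a i * x i) ν =
        ProbabilityTheory.gaussianReal (∑ i, a i * m i)
          (Real.toNNReal (a ⬝ᵥ G.mulVec a))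

open ProbabilityTheory

lemma measurable_dotProduct_left {ι : Type*} [Fintype ι] (a : ι → ℝ) :
    Measurable fun x : ι → ℝ => a ⬝ᵥ x :=
  (continuous_const.dotProduct continuous_id).measurable

lemma dotProduct_mul_mul_transpose_mulVec {ι κ : Type*} [Fintype ι] [Fintype κ]
    (A : Matrix κ ι ℝ) (G : Matrix ι ι ℝ) (a : κ → ℝ) :
    a ⬝ᵥ (A * G * Aᵀ) *ᵥ a = (Aᵀ *ᵥ a) ⬝ᵥ G *ᵥ (Aᵀ *ᵥ a) := by
  rw [← mulVec_mulVec, ← mulVec_mulVec, dotProduct_mulVec, ← mulVec_transpose]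

lemma IsMultivariateGaussian.map_dotProduct {ι Ω : Type*} [Fintype ι] [MeasurableSpace Ω]
    {P : Measure Ω} {X : Ω → ι → ℝ} {m : ι → ℝ} {G : Matrix ι ι ℝ}
    (h : IsMultivariateGaussian (P.map X) m G) (hX : Measurable X) (a : ι → ℝ) :
    P.map (fun ω => a ⬝ᵥ X ω) = gaussianReal (a ⬝ᵥ m) (a ⬝ᵥ G *ᵥ a).toNNReal := by
  rw [← Function.comp_def, ← Measure.map_map (measurable_dotProduct_left a) hX]
  exact h.2 a

theorem IsMultivariateGaussian.map_mulVec_add_mulVec {ι ι' κ Ω : Type*}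
    [Fintype ι] [Fintype ι'] [Fintype κ] [MeasurableSpace Ω] {P : Measure Ω}
    [IsProbabilityMeasure P] {X : Ω → ι → ℝ} {U : Ω → ι' → ℝ}
    {m : ι → ℝ} {m' : ι' → ℝ} {G : Matrix ι ι ℝ} {G' : Matrix ι' ι' ℝ}
    (hXlaw : IsMultivariateGaussian (P.map X) m G) (hUlaw : IsMultivariateGaussian (P.map U) m' G')
    (hX : Measurable X) (hU : Measurable U) (hXU : IndepFun X U P)
    (hG : G.PosSemidef) (hG' : G'.PosSemidef) (A : Matrix κ ι ℝ) (B : Matrix κ ι' ℝ) :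
    IsMultivariateGaussian (P.map fun ω => A *ᵥ X ω + B *ᵥ U ω)
      (A *ᵥ m + B *ᵥ m') (A * G * Aᵀ + B * G' * Bᵀ) := by
  have hY : Measurable fun ω => A *ᵥ X ω + B *ᵥ U ω :=
    ((continuous_const.matrix_mulVec continuous_id).measurable.comp hX).add
      ((continuous_const.matrix_mulVec continuous_id).measurable.comp hU)
  refine ⟨Measure.isProbabilityMeasure_map hY.aemeasurable, fun a => ?_⟩
  have hsum := gaussianReal_add_gaussianReal_of_indepFun
    (hXU.comp (measurable_dotProduct_left (Aᵀ *ᵥ a)) (measurable_dotProduct_left (Bᵀ *ᵥ a)))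
    (hXlaw.map_dotProduct hX (Aᵀ *ᵥ a)) (hUlaw.map_dotProduct hU (Bᵀ *ᵥ a))
  have hsplit : (fun y => a ⬝ᵥ y) ∘ (fun ω => A *ᵥ X ω + B *ᵥ U ω) =
      (fun x => (Aᵀ *ᵥ a) ⬝ᵥ x) ∘ X + (fun x => (Bᵀ *ᵥ a) ⬝ᵥ x) ∘ U := by
    funext ω
    simp only [Function.comp_apply, Pi.add_apply, dotProduct_add, dotProduct_mulVec,
      mulVec_transpose]
  change (P.map _).map (fun y => a ⬝ᵥ y) = gaussianReal (a ⬝ᵥ (A *ᵥ m + B *ᵥ m')) _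
  rw [Measure.map_map (measurable_dotProduct_left a) hY, hsplit, hsum, add_mulVec, dotProduct_add,
    dotProduct_add,
    dotProduct_mul_mul_transpose_mulVec, dotProduct_mul_mul_transpose_mulVec,
    Real.toNNReal_add (by simpa using hG.dotProduct_mulVec_nonneg (Aᵀ *ᵥ a))
      (by simpa using hG'.dotProduct_mulVec_nonneg (Bᵀ *ᵥ a))]
  simp only [dotProduct_mulVec, mulVec_transpose]

lemma fromRows_mul_mul_transpose_fromRows {m₁ m₂ n R : Type*} [Fintype n] [CommSemiring R]
    (A₁ : Matrix m₁ n R) (A₂ : Matrix m₂ n R) (G : Matrix n n R) :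
    fromRows A₁ A₂ * G * (fromRows A₁ A₂)ᵀ =
      fromBlocks (A₁ * G * A₁ᵀ) (A₁ * G * A₂ᵀ) (A₂ * G * A₁ᵀ) (A₂ * G * A₂ᵀ) := by
  rw [fromRows_mul, transpose_fromRows, fromRows_mul_fromCols]

lemma knockoff_joint_covariance {n : Type*} [Fintype n] [DecidableEq n]
    {Sig S L : Matrix n n ℝ} (hSig : Sig.IsSymm) (hdet : IsUnit Sig.det) (hS : S.IsSymm)
    (hL : L * Lᵀ = (2 : ℝ) • S - S * Sig⁻¹ * S) :
    fromRows (1 : Matrix n n ℝ) (1 - S * Sig⁻¹) * Sig * (fromRows 1 (1 - S * Sig⁻¹))ᵀ +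
        fromRows (0 : Matrix n n ℝ) L * (1 : Matrix n n ℝ) * (fromRows 0 L)ᵀ =
      fromBlocks Sig (Sig - S) (Sig - S) Sig := by
  have hSig_mul_Mt : Sig * (1 - S * Sig⁻¹)ᵀ = Sig - S := by
    rw [transpose_sub, transpose_one, transpose_mul, hS.eq, hSig.inv.eq, mul_sub, mul_one,
      ← mul_assoc, mul_nonsing_inv _ hdet, one_mul]
  have hM_mul_Sig : (1 - S * Sig⁻¹) * Sig = Sig - S := by
    rw [sub_mul, one_mul, mul_assoc, nonsing_inv_mul _ hdet, mul_one]
  have hcorner : (Sig - S) * (1 - S * Sig⁻¹)ᵀ + L * Lᵀ = Sig := by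
    rw [← hM_mul_Sig, mul_assoc, hSig_mul_Mt, hL, sub_mul, one_mul, mul_sub, mul_assoc S Sig⁻¹ Sig,
      nonsing_inv_mul _ hdet, mul_one, two_smul]
    abel
  rw [fromRows_mul_mul_transpose_fromRows, fromRows_mul_mul_transpose_fromRows, fromBlocks_add]
  simp only [one_mul, mul_one, transpose_one, transpose_zero, zero_mul, mul_zero, add_zero,
    hSig_mul_Mt, hM_mul_Sig, hcorner]

theorem gaussian_knockoff_sampling_law_general {p : ℕ}
    (Sig S L : Matrix (Fin p) (Fin p) ℝ)
    (hSig : Sig.PosDef) (hSpsd : S.PosSemidef)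
    (hL : L * Lᵀ = (2 : ℝ) • S - S * Sig⁻¹ * S)
    {Ω : Type*} [MeasurableSpace Ω] (P : Measure Ω) [IsProbabilityMeasure P]
    (X U : Ω → (Fin p → ℝ)) (hX : Measurable X) (hU : Measurable U)
    (hXU : ProbabilityTheory.IndepFun X U P)
    (hXlaw : IsMultivariateGaussian (P.map X) 0 Sig)
    (hUlaw : IsMultivariateGaussian (P.map U) 0 1) :
    IsMultivariateGaussian
      (P.map fun ω =>
        Sum.elim (X ω) (((1 - S * Sig⁻¹).mulVec (X ω)) + L.mulVec (U ω)))
      0 (Matrix.fromBlocks Sig (Sig - S) (Sig - S) Sig) := by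
  have hjoint := hXlaw.map_mulVec_add_mulVec hUlaw hX hU hXU hSig.posSemidef PosSemidef.one
    (fromRows (1 : Matrix (Fin p) (Fin p) ℝ) (1 - S * Sig⁻¹))
    (fromRows (0 : Matrix (Fin p) (Fin p) ℝ) L)
  rw [knockoff_joint_covariance (isHermitian_iff_isSymm.mp hSig.isHermitian)
    hSig.det_pos.ne'.isUnit (isHermitian_iff_isSymm.mp hSpsd.isHermitian) hL] at hjoint
  convert hjoint using 2
  · ext ω (i | i) <;> simp
  · simp

/-- **Distributional correctness of Gaussian knockoff sampling.**
Let `p` be a positive integer, `Σ` a real symmetric positive definite `p×p` matrix,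
`S` a real symmetric positive semidefinite `p×p` matrix with `2Σ − S` positive
semidefinite, and `L` a real `p×p` matrix with `L Lᵀ = 2S − S Σ⁻¹ S`.  Let `X` be a
random vector in `ℝ^p` with the multivariate Gaussian distribution of mean `0` and
covariance `Σ`, and `U` an independent random vector in `ℝ^p` with the standard
multivariate Gaussian distribution (mean `0`, identity covariance).  Define
`X̃ = (I − SΣ⁻¹) X + L U`.  Then the joint random vector `(X, X̃)` in `ℝ^{2p}` has
the multivariate Gaussian distribution with mean `0` and covariance
`G = [[Σ, Σ−S],[Σ−S, Σ]]`. -/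
theorem gaussian_knockoff_sampling_law {p : ℕ} (hp : 0 < p)
    (Sig S L : Matrix (Fin p) (Fin p) ℝ)
    (hSig : Sig.PosDef) (hSpsd : S.PosSemidef)
    (h2 : ((2 : ℝ) • Sig - S).PosSemidef)
    (hL : L * Lᵀ = (2 : ℝ) • S - S * Sig⁻¹ * S)
    {Ω : Type*} [MeasurableSpace Ω] (P : Measure Ω) [IsProbabilityMeasure P]
    (X U : Ω → (Fin p → ℝ)) (hX : Measurable X) (hU : Measurable U)
    (hXU : ProbabilityTheory.IndepFun X U P)
    (hXlaw : IsMultivariateGaussian (P.map X) 0 Sig)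
    (hUlaw : IsMultivariateGaussian (P.map U) 0 1) :
    IsMultivariateGaussian
      (P.map fun ω =>
        Sum.elim (X ω) (((1 - S * Sig⁻¹).mulVec (X ω)) + L.mulVec (U ω)))
      0 (Matrix.fromBlocks Sig (Sig - S) (Sig - S) Sig) :=
  gaussian_knockoff_sampling_law_general Sig S L hSig hSpsd hL P X U hX hU hXU hXlaw hUlaw
end

section
/- Let ε_1, …, ε_k be i.i.d. random variables uniform on {−1, +1} with k ≥ 1, and for 0 ≤ j ≤ k let V⁺(j) = #{i ≤ j : ε_i = +1} and V⁻(j) = j − V⁺(j). Then for every v ∈ {0, 1, …, k}: E[ (V⁺(k−1) / (1 + V⁻(k−1))) · 1{V⁺(k) = v} ] ≤ (v / (1 + k − v)) · P(V⁺(k) = v), with equality whenever v < k. -/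
/-!
Which signs are `+1` is a uniformly random subset `S` of the `k` indices: by independence every
`S` has probability `2⁻ᵏ`. Both sides are therefore `2⁻ᵏ` times sums over the `v`-subsets of the
indices. Split those according to whether the last index lies in `S`: the `C(k-1, v-1)` subsets
that contain it contribute the ratio `(v-1)/(1+k-v)`, the `C(k-1, v)` others contribute `v/(k-v)`.
Since `C(k-1, v-1) = (v/k) C(k, v)` and `C(k-1, v) = ((k-v)/k) C(k, v)`, the total is exactly
`C(k, v) v/(1+k-v)` when `v < k`; when `v = k` only the first kind occurs and `k-1 ≤ k`.
-/

open MeasureTheory Finset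

/-- `V⁺(j)`: the number of the first `j` signs `ε_1, …, ε_j` that equal `+1`
(with 1-based sign `ε_i` modelled as the 0-based entry `ε ⟨i-1⟩`). -/
def Vplus {Ω : Type*} {k : ℕ} (ε : Fin k → Ω → ℤ) (j : ℕ) (ω : Ω) : ℕ :=
  (univ.filter fun i : Fin k => (i : ℕ) < j ∧ ε i ω = 1).card

/-- `V⁻(j) = j − V⁺(j)`: the number of the first `j` signs that equal `−1`. -/
def Vminus {Ω : Type*} {k : ℕ} (ε : Fin k → Ω → ℤ) (j : ℕ) (ω : Ω) : ℕ :=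
  j - Vplus ε j ω

open ProbabilityTheory

def plusSet {ι Ω : Type*} [Fintype ι] (ε : ι → Ω → ℤ) (ω : Ω) : Finset ι :=
  univ.filter fun i => ε i ω = 1

noncomputable def signRatio (n j : ℕ) : ℝ := j / (1 + (n - j : ℕ))

lemma Vplus_eq_card_plusSet {Ω : Type*} {k : ℕ} (ε : Fin k → Ω → ℤ) (ω : Ω) :
    Vplus ε k ω = #(plusSet ε ω) := by
  simp [Vplus, plusSet]

lemma Vplus_eq_card_plusSet_erase_last {Ω : Type*} {n : ℕ} (ε : Fin (n + 1) → Ω → ℤ) (ω : Ω) :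
    Vplus ε n ω = #((plusSet ε ω).erase (Fin.last n)) := by
  rw [← filter_ne']
  simp [Vplus, plusSet, filter_filter, ← Fin.lt_last_iff_ne_last, Fin.lt_def, and_comm]

section
variable {α M : Type*} [DecidableEq α] {a : α} {s : Finset α} {n v : ℕ}

lemma sum_powersetCard_succ_insert_erase [AddCommMonoid M] (ha : a ∉ s) (m : ℕ)
    (g : Finset α → M) :
    ∑ T ∈ powersetCard (m + 1) (insert a s), g (T.erase a) =
      ∑ T ∈ powersetCard (m + 1) s, g T + ∑ T ∈ powersetCard m s, g T := by
  have notMem : ∀ j, ∀ T ∈ powersetCard j s, a ∉ T := fun j T hT h =>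
    ha (mem_powersetCard.mp hT |>.1 h)
  rw [powersetCard_succ_insert ha, sum_union, sum_image]
  · refine congrArg₂ (· + ·) (sum_congr rfl fun T hT => ?_) (sum_congr rfl fun T hT => ?_)
    · rw [erase_eq_of_notMem (notMem _ T hT)]
    · rw [erase_insert (notMem _ T hT)]
  · intro T hT U hU h
    rw [← erase_insert (notMem _ T hT), ← erase_insert (notMem _ U hU), h]
  · rw [disjoint_right]
    intro T hT hT'
    obtain ⟨U, -, rfl⟩ := mem_image.mp hT
    exact notMem _ _ hT' (mem_insert_self a U)

lemma choose_mul_signRatio_add {m : ℕ} (hm : m < n) :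
    n.choose (m + 1) * signRatio n (m + 1) + n.choose m * signRatio n m =
      (m + 1 : ℝ) / (1 + (n + 1) - (m + 1)) * (n + 1).choose (m + 1) := by
  have h₁ := congrArg (Nat.cast : ℕ → ℝ) (Nat.choose_succ_right_eq n m)
  have h₂ := congrArg (Nat.cast : ℕ → ℝ) (Nat.add_one_mul_choose_eq n m)
  push_cast [Nat.cast_sub hm.le] at h₁ h₂
  have hnm : (m : ℝ) + 1 ≤ n := by exact_mod_cast hm
  simp only [signRatio, Nat.cast_sub hm, Nat.cast_sub hm.le]
  push_cast
  rw [show (1 : ℝ) + (n - (m + 1)) = n - m by ring,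
    show (1 : ℝ) + (n + 1) - (m + 1) = 1 + (n - m) by ring]
  have hd₁ : (n : ℝ) - m ≠ 0 := by linarith
  have hd₂ : 1 + ((n : ℝ) - m) ≠ 0 := by linarith
  field_simp
  linear_combination (1 + (n : ℝ) - m) * h₁ + (n - m : ℝ) * h₂

lemma sum_powersetCard_insert_signRatio_eq (ha : a ∉ s) (hs : #s = n) (hv : v ≤ n) :
    ∑ T ∈ powersetCard v (insert a s), signRatio n #(T.erase a) =
      v / (1 + (n + 1) - v) * (n + 1).choose v := by
  subst hs
  cases v with
  | zero => simp [signRatio]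
  | succ m =>
    rw [sum_powersetCard_succ_insert_erase ha m fun T => signRatio #s #T, sum_powersetCard,
      sum_powersetCard, nsmul_eq_mul, nsmul_eq_mul, choose_mul_signRatio_add hv]
    push_cast
    ring

lemma sum_powersetCard_insert_signRatio_le (ha : a ∉ s) (hs : #s = n) (hv : v ≤ n + 1) :
    ∑ T ∈ powersetCard v (insert a s), signRatio n #(T.erase a) ≤
      v / (1 + (n + 1) - v) * (n + 1).choose v := by
  rcases hv.lt_or_eq with hv | rfl
  · exact (sum_powersetCard_insert_signRatio_eq ha hs (Nat.le_of_lt_succ hv)).le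
  · subst hs
    rw [← card_insert_of_notMem ha, powersetCard_self, card_insert_of_notMem ha]
    simp [erase_insert ha, signRatio]

end

section
variable {ι Ω : Type*} [Fintype ι] [MeasurableSpace Ω] {P : Measure Ω} [IsProbabilityMeasure P]
  {ε : ι → Ω → ℤ}

lemma measurable_plusSet (hmeas : ∀ i, Measurable (ε i)) : Measurable (plusSet ε) := by
  rw [measurable_finset_iff]
  intro i
  simp only [plusSet, mem_filter, mem_univ, true_and]
  exact measurableSet_setOfPred.mp (hmeas i (measurableSet_singleton 1))

lemma measure_plusSet_preimage_singleton (hmeas : ∀ i, Measurable (ε i))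
    (hindep : iIndepFun ε P) (hplus : ∀ i, P (ε i ⁻¹' {1}) = 1 / 2) (S : Finset ι) :
    P (plusSet ε ⁻¹' {S}) = 2⁻¹ ^ Fintype.card ι := by
  classical
  have hS : plusSet ε ⁻¹' {S} = ⋂ i, ε i ⁻¹' (if i ∈ S then {1} else {1}ᶜ) := by
    ext ω
    simp only [Set.mem_preimage, Set.mem_singleton_iff, Set.mem_iInter, Finset.ext_iff, plusSet,
      mem_filter, mem_univ, true_and]
    refine forall_congr' fun i => ?_
    split_ifs with hi <;> simp [hi]
  have half : ∀ i, P (ε i ⁻¹' (if i ∈ S then {1} else {1}ᶜ)) = 2⁻¹ := by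
    intro i
    split_ifs
    · rw [hplus, one_div]
    · rw [Set.preimage_compl, prob_compl_eq_one_sub (hmeas i (measurableSet_singleton 1)), hplus,
        one_div, ENNReal.one_sub_inv_two]
  rw [hS, hindep.meas_iInter fun i => ⟨_, by split_ifs <;> measurability, rfl⟩,
    Finset.prod_congr rfl fun i _ => half i, prod_const, card_univ]

lemma integral_comp_plusSet (hmeas : ∀ i, Measurable (ε i)) (hindep : iIndepFun ε P)
    (hplus : ∀ i, P (ε i ⁻¹' {1}) = 1 / 2) (f : Finset ι → ℝ) :
    ∫ ω, f (plusSet ε ω) ∂P = (∑ S, f S) * 2⁻¹ ^ Fintype.card ι := by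
  rw [← integral_map (measurable_plusSet hmeas).aemeasurable (by fun_prop),
    integral_fintype (Integrable.of_finite), sum_mul]
  refine Finset.sum_congr rfl fun S _ => ?_
  rw [measureReal_def, Measure.map_apply (measurable_plusSet hmeas) (measurableSet_singleton S),
    measure_plusSet_preimage_singleton hmeas hindep hplus, smul_eq_mul, mul_comm]
  simp

lemma measureReal_plusSet_preimage (hmeas : ∀ i, Measurable (ε i)) (hindep : iIndepFun ε P)
    (hplus : ∀ i, P (ε i ⁻¹' {1}) = 1 / 2) (T : Finset (Finset ι)) :
    P.real (plusSet ε ⁻¹' T) = #T * 2⁻¹ ^ Fintype.card ι := by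
  rw [measureReal_def, ← sum_measure_preimage_singleton T
    fun S _ => measurable_plusSet hmeas (measurableSet_singleton S)]
  simp [measure_plusSet_preimage_singleton hmeas hindep hplus]

end

section
variable {Ω : Type*} [MeasurableSpace Ω] {P : Measure Ω} [IsProbabilityMeasure P]

lemma measureReal_Vplus_eq {k : ℕ} {ε : Fin k → Ω → ℤ} (hmeas : ∀ i, Measurable (ε i))
    (hindep : iIndepFun ε P) (hplus : ∀ i, P (ε i ⁻¹' {1}) = 1 / 2) (v : ℕ) :
    P.real {ω | Vplus ε k ω = v} = k.choose v * 2⁻¹ ^ k := by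
  have : {ω | Vplus ε k ω = v} = plusSet ε ⁻¹' ↑(powersetCard v (univ : Finset (Fin k))) := by
    ext ω
    simp [Vplus_eq_card_plusSet]
  rw [this, measureReal_plusSet_preimage hmeas hindep hplus, card_powersetCard, card_univ,
    Fintype.card_fin]

lemma integral_signRatio_ite_Vplus_eq {n : ℕ} {ε : Fin (n + 1) → Ω → ℤ}
    (hmeas : ∀ i, Measurable (ε i)) (hindep : iIndepFun ε P)
    (hplus : ∀ i, P (ε i ⁻¹' {1}) = 1 / 2) (v : ℕ) :
    ∫ ω, (if Vplus ε (n + 1) ω = v then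
        (Vplus ε n ω : ℝ) / (1 + (Vminus ε n ω : ℝ)) else 0) ∂P =
      (∑ T ∈ powersetCard v univ, signRatio n #(T.erase (Fin.last n))) * 2⁻¹ ^ (n + 1) := by
  simp only [Vminus, Vplus_eq_card_plusSet, Vplus_eq_card_plusSet_erase_last]
  refine (integral_comp_plusSet hmeas hindep hplus
    fun S => if #S = v then signRatio n #(S.erase (Fin.last n)) else 0).trans ?_
  rw [← sum_filter, Fintype.card_fin, powersetCard_eq_filter, powerset_univ]

end

theorem sign_ratio_one_step_general {Ω : Type*} [MeasurableSpace Ω]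
    (P : Measure Ω) [IsProbabilityMeasure P] (k : ℕ) (hk : 1 ≤ k)
    (ε : Fin k → Ω → ℤ) (hmeas : ∀ i, Measurable (ε i))
    (hindep : ProbabilityTheory.iIndepFun ε P)
    (hplus : ∀ i, P (ε i ⁻¹' {1}) = 1 / 2)
    (v : ℕ) (hv : v ≤ k) :
    (∫ ω, (if Vplus ε k ω = v then
          (Vplus ε (k - 1) ω : ℝ) / (1 + (Vminus ε (k - 1) ω : ℝ)) else 0) ∂P ≤
        (v : ℝ) / (1 + (k : ℝ) - (v : ℝ)) * (P {ω | Vplus ε k ω = v}).toReal) ∧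
      (v < k →
        ∫ ω, (if Vplus ε k ω = v then
            (Vplus ε (k - 1) ω : ℝ) / (1 + (Vminus ε (k - 1) ω : ℝ)) else 0) ∂P =
          (v : ℝ) / (1 + (k : ℝ) - (v : ℝ)) * (P {ω | Vplus ε k ω = v}).toReal) := by
  obtain ⟨n, rfl⟩ : ∃ n, k = n + 1 := ⟨k - 1, by omega⟩
  have hlast : Fin.last n ∉ univ.erase (Fin.last n) := notMem_erase _ _
  have hcard : #(univ.erase (Fin.last n)) = n := by simp
  rw [Nat.add_sub_cancel, integral_signRatio_ite_Vplus_eq hmeas hindep hplus, ← measureReal_def,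
    measureReal_Vplus_eq hmeas hindep hplus, ← insert_erase (mem_univ (Fin.last n))]
  push_cast
  refine ⟨?_, fun hvn => ?_⟩
  · rw [← mul_assoc]
    exact mul_le_mul_of_nonneg_right (sum_powersetCard_insert_signRatio_le hlast hcard hv)
      (by positivity)
  · rw [sum_powersetCard_insert_signRatio_eq hlast hcard (by omega)]
    ring

/-- **One-step supermartingale inequality for the sign ratio process.**
Let `ε_1, …, ε_k` be i.i.d. random variables uniform on `{−1, +1}` with `k ≥ 1`,
and for `0 ≤ j ≤ k` let `V⁺(j) = #{i ≤ j : ε_i = +1}` and `V⁻(j) = j − V⁺(j)`.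
Then for every `v ∈ {0, 1, …, k}`:
`E[ (V⁺(k−1) / (1 + V⁻(k−1))) · 1{V⁺(k) = v} ] ≤ (v / (1 + k − v)) · P(V⁺(k) = v)`,
with equality whenever `v < k`. -/
theorem sign_ratio_one_step {Ω : Type*} [MeasurableSpace Ω]
    (P : Measure Ω) [IsProbabilityMeasure P] (k : ℕ) (hk : 1 ≤ k)
    (ε : Fin k → Ω → ℤ) (hmeas : ∀ i, Measurable (ε i))
    (hindep : ProbabilityTheory.iIndepFun ε P)
    (hplus : ∀ i, P (ε i ⁻¹' {1}) = 1 / 2)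
    (hminus : ∀ i, P (ε i ⁻¹' {-1}) = 1 / 2)
    (v : ℕ) (hv : v ≤ k) :
    (∫ ω, (if Vplus ε k ω = v then
          (Vplus ε (k - 1) ω : ℝ) / (1 + (Vminus ε (k - 1) ω : ℝ)) else 0) ∂P ≤
        (v : ℝ) / (1 + (k : ℝ) - (v : ℝ)) * (P {ω | Vplus ε k ω = v}).toReal) ∧
      (v < k →
        ∫ ω, (if Vplus ε k ω = v then
            (Vplus ε (k - 1) ω : ℝ) / (1 + (Vminus ε (k - 1) ω : ℝ)) else 0) ∂P =
          (v : ℝ) / (1 + (k : ℝ) - (v : ℝ)) * (P {ω | Vplus ε k ω = v}).toReal) :=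
  sign_ratio_one_step_general P k hk ε hmeas hindep hplus v hv
end
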